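/- arXiv:2204.07698 — 6 statements merged into one kernel-verified Lean document; each statement's English description precedes it below -/
import Mathlib

section
/- Let Φ, Ψ ∈ F(x_1,…,x_n). Then G_Ψ ⊆ G_Φ if and only if Φ belongs to the subfield F(e_1,…,e_n,Ψ) of F(x_1,…,x_n) generated over F by e_1,…,e_n and Ψ. -/
open MvPolynomial

/-- The action of a permutation `σ ∈ S_n` on the rational function field `F(x_1,…,x_n)`,
given by `Φ(x_1,…,x_n) ↦ Φ(x_{σ(1)},…,x_{σ(n)})`. -/
noncomputable def permAct (F : Type*) [Field F] (n : ℕ) (σ : Equiv.Perm (Fin n)) :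
    FractionRing (MvPolynomial (Fin n) F) ≃+* FractionRing (MvPolynomial (Fin n) F) :=
  IsFractionRing.ringEquivOfRingEquiv (MvPolynomial.renameEquiv F σ).toRingEquiv

/-- The constants from `F` inside `F(x_1,…,x_n)`. -/
noncomputable def constSet (F : Type*) [Field F] (n : ℕ) :
    Set (FractionRing (MvPolynomial (Fin n) F)) :=
  Set.range fun a : F =>
    algebraMap (MvPolynomial (Fin n) F) (FractionRing (MvPolynomial (Fin n) F)) (C a)

/-- The elementary symmetric polynomials `e_1,…,e_n` inside `F(x_1,…,x_n)`. -/
noncomputable def esymmSet (F : Type*) [Field F] (n : ℕ) :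
    Set (FractionRing (MvPolynomial (Fin n) F)) :=
  Set.range fun i : Fin n =>
    algebraMap (MvPolynomial (Fin n) F) (FractionRing (MvPolynomial (Fin n) F))
      (esymm (Fin n) F ((i : ℕ) + 1))

/-! The permutation action makes `F(x₁,…,xₙ)` a Galois extension of its fixed field with group
`Sₙ` (Artin), and that fixed field is `F(e₁,…,eₙ)`: a fixed `p / q` equals `P / Q` with
`Q = ∏_σ σq` and `P = p · ∏_{σ ≠ 1} σq`, both symmetric and hence polynomials in the `eᵢ`.
By the Galois correspondence `F(e₁,…,eₙ,Ψ)` is the fixed field of its fixing subgroup, which is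
the stabilizer `G_Ψ`; so `Φ` lies in it iff `G_Ψ` fixes `Φ`. -/

theorem MvPolynomial.isSymmetric_prod_rename {σ R : Type*} [Fintype σ] [DecidableEq σ]
    [CommSemiring R] (q : MvPolynomial σ R) :
    (∏ e : Equiv.Perm σ, rename e q).IsSymmetric := fun τ => by
  rw [map_prod]
  exact Fintype.prod_equiv (Equiv.mulLeft τ) _ _ fun e => rename_rename _ _ q

namespace IsGaloisGroup

variable {G K L : Type*} [Group G] [Field K] [Field L] [Algebra K L] [MulSemiringAction G L]

theorem fixingSubgroup_adjoin_simple [SMulCommClass G K L] (y : L) :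
    fixingSubgroup G (IntermediateField.adjoin K {y} : Set L) = MulAction.stabilizer G y := by
  refine le_antisymm (fun g hg => hg ⟨y, IntermediateField.mem_adjoin_simple_self K y⟩) ?_
  rw [← le_fixedPoints_iff_le_fixingSubgroup, IntermediateField.adjoin_simple_le_iff]
  exact fun g => g.2

theorem mem_adjoin_simple_iff_stabilizer_le [Finite G] [IsGaloisGroup G K L] (x y : L) :
    x ∈ IntermediateField.adjoin K {y} ↔ MulAction.stabilizer G y ≤ MulAction.stabilizer G x := by
  rw [← fixedPoints_fixingSubgroup G K L (IntermediateField.adjoin K {y}),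
    fixingSubgroup_adjoin_simple, FixedPoints.mem_intermediateField_iff]
  exact ⟨fun h g hg => h ⟨g, hg⟩, fun h g => h g.2⟩

end IsGaloisGroup

section PermAction

variable {F : Type*} [Field F] {n : ℕ}

local notation "R" => MvPolynomial (Fin n) F
local notation "K" => FractionRing (MvPolynomial (Fin n) F)

variable (F n) in
noncomputable def permActHom : Equiv.Perm (Fin n) →* RingAut K :=
  (IsFractionRing.ringEquivOfRingEquivHom R K).comp
    { toFun := fun σ => (renameEquiv F σ).toRingEquiv
      map_one' := by ext; simp
      map_mul' := fun σ τ => by ext; simp [rename_rename] }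

-- `σ • x` unfolds to `permAct F n σ x`, so stabilizers are the sets in the statement.
noncomputable instance : MulSemiringAction (Equiv.Perm (Fin n)) K :=
  MulSemiringAction.compHom K (permActHom F n)

theorem perm_smul_algebraMap (σ : Equiv.Perm (Fin n)) (p : R) :
    σ • algebraMap R K p = algebraMap R K (rename σ p) :=
  IsFractionRing.ringEquivOfRingEquiv_algebraMap _ p

instance : FaithfulSMul (Equiv.Perm (Fin n)) K where
  eq_of_smul_eq_smul {σ τ} h := by
    ext i
    have := h (algebraMap R K (X i))
    simp only [perm_smul_algebraMap, rename_X] at this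
    exact congrArg Fin.val (X_injective (IsFractionRing.injective R K this))

end PermAction

section FixedField

variable {F : Type*} [Field F] {n : ℕ}

local notation "R" => MvPolynomial (Fin n) F
local notation "K" => FractionRing (MvPolynomial (Fin n) F)

theorem isSymmetric_of_forall_smul_algebraMap_eq {p : R}
    (hp : ∀ σ : Equiv.Perm (Fin n), σ • algebraMap R K p = algebraMap R K p) : p.IsSymmetric :=
  fun σ => IsFractionRing.injective R K <| (perm_smul_algebraMap σ p).symm.trans (hp σ)

theorem algebraMap_aeval_esymm_mem_closure (q : R) :
    algebraMap R K (aeval (fun i : Fin n => esymm (Fin n) F ((i : ℕ) + 1)) q) ∈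
      Subfield.closure (constSet F n ∪ esymmSet F n) := by
  induction q using MvPolynomial.induction_on with
  | C a => exact Subfield.subset_closure (.inl ⟨a, by rw [aeval_C]; rfl⟩)
  | add f g hf hg => rw [map_add, map_add]; exact add_mem hf hg
  | mul_X f i hf =>
    rw [map_mul, map_mul, aeval_X]
    exact mul_mem hf (Subfield.subset_closure (.inr ⟨i, rfl⟩))

theorem algebraMap_mem_closure_of_isSymmetric {p : R} (hp : p.IsSymmetric) :
    algebraMap R K p ∈ Subfield.closure (constSet F n ∪ esymmSet F n) := by
  obtain ⟨q, hq⟩ := esymmAlgHom_surjective F (Fintype.card_fin n).le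
    ⟨p, (mem_symmetricSubalgebra p).2 hp⟩
  have hqp : _ = p := congrArg Subtype.val hq
  rw [esymmAlgHom_apply] at hqp
  exact hqp ▸ algebraMap_aeval_esymm_mem_closure q

theorem exists_isSymmetric_eq_div {x : K} (hx : ∀ σ : Equiv.Perm (Fin n), σ • x = x) :
    ∃ P Q : R, P.IsSymmetric ∧ Q.IsSymmetric ∧ x = algebraMap R K P / algebraMap R K Q := by
  obtain ⟨p, q, hq, rfl⟩ := IsFractionRing.div_surjective (A := R) x
  have hq0 : algebraMap R K q ≠ 0 := IsFractionRing.to_map_ne_zero_of_mem_nonZeroDivisors hq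
  set Q := ∏ σ : Equiv.Perm (Fin n), rename σ q with hQ
  set P := p * ∏ σ ∈ Finset.univ.erase (1 : Equiv.Perm (Fin n)), rename σ q
  have hPQ : algebraMap R K P = algebraMap R K p / algebraMap R K q * algebraMap R K Q := by
    rw [hQ, ← Finset.mul_prod_erase _ _ (Finset.mem_univ 1)]
    simp only [P, Equiv.Perm.coe_one, rename_id, AlgHom.id_apply, map_mul]
    field_simp
  have hQ0 : algebraMap R K Q ≠ 0 := by
    rw [hQ, map_prod]
    exact Finset.prod_ne_zero_iff.2 fun σ _ => by
      rw [← perm_smul_algebraMap, smul_ne_zero_iff_ne]; exact hq0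
  refine ⟨P, Q, isSymmetric_of_forall_smul_algebraMap_eq fun σ => ?_, isSymmetric_prod_rename q,
    by rw [hPQ, mul_div_cancel_right₀ _ hQ0]⟩
  rw [hPQ, smul_mul', hx, perm_smul_algebraMap, isSymmetric_prod_rename q σ]

theorem closure_constSet_union_esymmSet :
    Subfield.closure (constSet F n ∪ esymmSet F n) =
      FixedPoints.subfield (Equiv.Perm (Fin n)) K := by
  refine le_antisymm (Subfield.closure_le.2 ?_) fun x hx => ?_
  · rintro _ (⟨a, rfl⟩ | ⟨i, rfl⟩) σ
    · rw [perm_smul_algebraMap, rename_C]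
    · rw [perm_smul_algebraMap, esymm_isSymmetric]
  · obtain ⟨P, Q, hP, hQ, rfl⟩ := exists_isSymmetric_eq_div hx
    exact div_mem (algebraMap_mem_closure_of_isSymmetric hP)
      (algebraMap_mem_closure_of_isSymmetric hQ)

theorem closure_union_singleton_eq_adjoin (Ψ : K) :
    Subfield.closure (constSet F n ∪ esymmSet F n ∪ {Ψ}) =
      (IntermediateField.adjoin (FixedPoints.subfield (Equiv.Perm (Fin n)) K) {Ψ}).toSubfield := by
  rw [IntermediateField.adjoin_toSubfield, Subfield.closure_union, Subfield.closure_union _ {Ψ},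
    closure_constSet_union_esymmSet]
  congr 1
  exact (Subfield.closure_eq _).symm.trans (congrArg _ Subtype.range_coe.symm)

end FixedField

theorem stabilizer_subset_iff_mem_adjoin_general
    (F : Type*) [Field F] (n : ℕ)
    (Φ Ψ : FractionRing (MvPolynomial (Fin n) F)) :
    {σ : Equiv.Perm (Fin n) | permAct F n σ Ψ = Ψ} ⊆
        {σ : Equiv.Perm (Fin n) | permAct F n σ Φ = Φ} ↔
      Φ ∈ Subfield.closure (constSet F n ∪ esymmSet F n ∪ {Ψ}) := by
  rw [closure_union_singleton_eq_adjoin, IntermediateField.mem_toSubfield,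
    IsGaloisGroup.mem_adjoin_simple_iff_stabilizer_le (G := Equiv.Perm (Fin n))]
  rfl

/-- **Theorem 4.1 (Lagrange).** For rational functions `Φ, Ψ ∈ F(x_1,…,x_n)`, the stabilizer
inclusion `G_Ψ ⊆ G_Φ` holds if and only if `Φ` lies in the subfield `F(e_1,…,e_n,Ψ)` generated
over `F` by the elementary symmetric polynomials and `Ψ`. -/
theorem stabilizer_subset_iff_mem_adjoin
    (F : Type*) [Field F] [CharZero F] (n : ℕ)
    (Φ Ψ : FractionRing (MvPolynomial (Fin n) F)) :
    {σ : Equiv.Perm (Fin n) | permAct F n σ Ψ = Ψ} ⊆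
        {σ : Equiv.Perm (Fin n) | permAct F n σ Φ = Φ} ↔
      Φ ∈ Subfield.closure (constSet F n ∪ esymmSet F n ∪ {Ψ}) :=
  stabilizer_subset_iff_mem_adjoin_general F n Φ Ψ
end

section
/- Let n ≥ 5, let G be a subgroup of the symmetric group S_n that contains every 3-cycle, let H be a subgroup of G, and suppose there exist γ ∈ G and an integer p ≥ 1 such that every element of G lies in γ^i H for some 0 ≤ i ≤ p−1, and γH = Hγ as subsets of S_n. Then H contains every 3-cycle. -/
/-! The identity `γH = Hγ` says that `γ` normalizes `H`. If `g₁ ∈ γ^i H` and `g₂ ∈ γ^j H`, then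
`⁅g₁, g₂⁆ ∈ H`, because modulo `H` the powers of `γ` commute. For `n ≥ 5` every 3-cycle is a
commutator of two even permutations, and these lie in `G`, which contains all 3-cycles and hence
the alternating group. -/

open scoped commutatorElement

theorem Subgroup.mem_normalizer_of_leftCoset_eq_rightCoset {G : Type*} [Group G]
    {H : Subgroup G} {γ : G}
    (hcoset : {x : G | ∃ h ∈ H, x = γ * h} = {x : G | ∃ h ∈ H, x = h * γ}) :
    γ ∈ Subgroup.normalizer (H : Set G) := by
  have hleft (x : G) : x ∈ {x : G | ∃ h ∈ H, x = γ * h} ↔ γ⁻¹ * x ∈ H :=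
    ⟨fun ⟨h, hh, hx⟩ => by simpa [hx] using hh, fun hx => ⟨_, hx, by group⟩⟩
  have hright (x : G) : x ∈ {x : G | ∃ h ∈ H, x = h * γ} ↔ x * γ⁻¹ ∈ H :=
    ⟨fun ⟨h, hh, hx⟩ => by simpa [hx] using hh, fun hx => ⟨_, hx, by group⟩⟩
  refine Subgroup.mem_normalizer_iff.2 fun h => ?_
  simpa [hleft, hright] using Set.ext_iff.1 hcoset (γ * h)

theorem Subgroup.commutatorElement_mem_of_inv_pow_mul_mem {G : Type*} [Group G]
    {H : Subgroup G} {γ : G} (hγ : γ ∈ Subgroup.normalizer (H : Set G)) {i j : ℕ} {g₁ g₂ : G}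
    (hg₁ : (γ ^ i)⁻¹ * g₁ ∈ H) (hg₂ : (γ ^ j)⁻¹ * g₂ ∈ H) : ⁅g₁, g₂⁆ ∈ H := by
  obtain ⟨h₁, hh₁, rfl⟩ : ∃ h ∈ H, g₁ = γ ^ i * h := ⟨_, hg₁, by group⟩
  obtain ⟨h₂, hh₂, rfl⟩ : ∃ h ∈ H, g₂ = γ ^ j * h := ⟨_, hg₂, by group⟩
  have hconj (k : ℕ) {x : G} (hx : x ∈ H) : γ ^ k * x * (γ ^ k)⁻¹ ∈ H :=
    (Subgroup.mem_normalizer_iff.1 (pow_mem hγ k) x).1 hx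
  have hprod : ⁅γ ^ i * h₁, γ ^ j * h₂⁆ = (γ ^ i * h₁ * (γ ^ i)⁻¹) *
      (γ ^ (i + j) * (h₂ * h₁⁻¹) * (γ ^ (i + j))⁻¹) * (γ ^ j * h₂⁻¹ * (γ ^ j)⁻¹) := by
    rw [commutatorElement_def, pow_add]
    group
  rw [hprod]
  exact H.mul_mem (H.mul_mem (hconj i hh₁) (hconj (i + j) (H.mul_mem hh₂ (H.inv_mem hh₁))))
    (hconj j (H.inv_mem hh₂))

theorem threeCycles_mem_of_coset_decomposition_general
    (n : ℕ) (hn : 5 ≤ n)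
    (G H : Subgroup (Equiv.Perm (Fin n)))
    (hG3 : ∀ c : Equiv.Perm (Fin n), c.IsThreeCycle → c ∈ G)
    (γ : Equiv.Perm (Fin n)) (p : ℕ)
    (hcover : ∀ g ∈ G, ∃ i : ℕ, i ≤ p - 1 ∧ (γ ^ i)⁻¹ * g ∈ H)
    (hcomm : {x : Equiv.Perm (Fin n) | ∃ h ∈ H, x = γ * h} =
      {x : Equiv.Perm (Fin n) | ∃ h ∈ H, x = h * γ}) :
    ∀ c : Equiv.Perm (Fin n), c.IsThreeCycle → c ∈ H := by
  intro c hc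
  have hAG : alternatingGroup (Fin n) ≤ G := by
    rw [← Equiv.Perm.closure_three_cycles_eq_alternating]
    exact (Subgroup.closure_le G).2 hG3
  obtain ⟨a, b, hab⟩ := Equiv.Perm.IsThreeCycle.mem_commutatorSet_alternatingGroup
    (g := ⟨c, hc.mem_alternatingGroup⟩) (by simpa using hn) hc
  have hc_eq : ⁅(a : Equiv.Perm (Fin n)), (b : Equiv.Perm (Fin n))⁆ = c :=
    congrArg Subtype.val hab
  obtain ⟨i, -, ha⟩ := hcover a (hAG a.2)
  obtain ⟨j, -, hb⟩ := hcover b (hAG b.2)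
  exact hc_eq ▸ Subgroup.commutatorElement_mem_of_inv_pow_mul_mem
    (Subgroup.mem_normalizer_of_leftCoset_eq_rightCoset hcomm) ha hb

/-- **Proposition 5.1.** Let `n ≥ 5`, let `G ≤ S_n` contain every 3-cycle, let `H ≤ G`, and
suppose there are `γ ∈ G` and `p ≥ 1` such that every element of `G` lies in some coset
`γ^i H` with `0 ≤ i ≤ p-1`, and `γH = Hγ`.  Then `H` contains every 3-cycle. -/
theorem threeCycles_mem_of_coset_decomposition
    (n : ℕ) (hn : 5 ≤ n)
    (G H : Subgroup (Equiv.Perm (Fin n))) (hHG : H ≤ G)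
    (hG3 : ∀ c : Equiv.Perm (Fin n), c.IsThreeCycle → c ∈ G)
    (γ : Equiv.Perm (Fin n)) (hγG : γ ∈ G) (p : ℕ) (hp : 1 ≤ p)
    (hcover : ∀ g ∈ G, ∃ i : ℕ, i ≤ p - 1 ∧ (γ ^ i)⁻¹ * g ∈ H)
    (hcomm : {x : Equiv.Perm (Fin n) | ∃ h ∈ H, x = γ * h} =
      {x : Equiv.Perm (Fin n) | ∃ h ∈ H, x = h * γ}) :
    ∀ c : Equiv.Perm (Fin n), c.IsThreeCycle → c ∈ H :=
  threeCycles_mem_of_coset_decomposition_general n hn G H hG3 γ p hcover hcomm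
end

section
/- Let F ⊆ E be fields of characteristic zero and let α_1,…,α_n be distinct elements of E such that every elementary symmetric function e_k(α_1,…,α_n) lies in F. Then for every subgroup G of S_n there exists a polynomial Φ ∈ F[x_1,…,x_n] such that the set {σ ∈ S_n : Φ(α_{σ(1)},…,α_{σ(n)}) = Φ(α_1,…,α_n)} equals G, and moreover this set coincides with the stabilizer {σ ∈ S_n : σΦ = Φ} of Φ as a polynomial. -/
/-!
Choose `t ∈ F` so that the linear form `θ = Σᵢ tⁱ xᵢ` takes pairwise distinct values
`θ(α ∘ ρ)` on the `n!` rearrangements of `α`, then `c ∈ F` so that the resolvent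
`Φ = ∏_{σ ∈ G} (c - σθ)` separates the cosets: both are possible because `F` is infinite and
only finitely many nonzero polynomials over `E` have to be avoided. `Φ` is visibly
`G`-invariant, invariance as a polynomial implies invariance of the value at `α`, and the choice
of `c` makes `Φ(α ∘ τ) = Φ(α)` force `τ ∈ G`, which closes the circle.
-/

open MvPolynomial

section ChoiceInInfiniteField

variable {F E : Type*} [Field F] [Field E] [Algebra F E] [Infinite F]

theorem exists_algebraMap_forall_eval_ne_zero {ι : Type*} {s : Set ι} (hs : s.Finite)
    (p : ι → Polynomial E) (hp : ∀ i ∈ s, p i ≠ 0) :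
    ∃ t : F, ∀ i ∈ s, (p i).eval (algebraMap F E t) ≠ 0 := by
  have hroots : (⋃ i ∈ s, {x | (p i).IsRoot x}).Finite :=
    hs.biUnion fun i hi => Polynomial.finite_setOfPred_isRoot (hp i hi)
  have hrange : (Set.range (algebraMap F E)).Infinite :=
    Set.infinite_range_of_injective (algebraMap F E).injective
  obtain ⟨_, ⟨t, rfl⟩, ht⟩ := (hrange.sdiff hroots).nonempty
  exact ⟨t, fun i hi h => ht (Set.mem_biUnion hi h)⟩

theorem exists_algebraMap_injective_sum_pow_mul {κ : Type*} [Finite κ] {n : ℕ}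
    {x : κ → Fin n → E} (hx : Function.Injective x) :
    ∃ t : F, Function.Injective fun k => ∑ i : Fin n, algebraMap F E t ^ (i : ℕ) * x k i := by
  classical
  have heval (s : E) (k : κ) :
      (Polynomial.ofFn n (x k)).eval s = ∑ i : Fin n, s ^ (i : ℕ) * x k i := by
    simp [Polynomial.ofFn_eq_sum_monomial, Polynomial.eval_finsetSum, mul_comm]
  obtain ⟨t, ht⟩ :=
    exists_algebraMap_forall_eval_ne_zero (F := F) (Set.toFinite {q | q.1 ≠ q.2})
    (fun q : κ × κ => Polynomial.ofFn n (x q.1) - Polynomial.ofFn n (x q.2))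
    fun q hq => sub_ne_zero.mpr ((Polynomial.injective_ofFn n).ne (hx.ne hq))
  refine ⟨t, fun k k' hkk' => by_contra fun hne => ht (k, k') hne ?_⟩
  simpa [Polynomial.eval_sub, heval, sub_eq_zero] using hkk'

theorem exists_algebraMap_prod_sub_eq_imp_mem {Γ : Type*} [Group Γ] [Finite Γ]
    (G : Subgroup Γ) [Fintype G] {w : Γ → E} (hw : Function.Injective w) :
    ∃ c : F, ∀ τ : Γ, ∏ σ : G, (algebraMap F E c - w (τ * σ)) =
      ∏ σ : G, (algebraMap F E c - w σ) → τ ∈ G := by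
  let p : Γ → Polynomial E := fun τ =>
    ∏ σ : G, (Polynomial.X - Polynomial.C (w (τ * σ))) -
      ∏ σ : G, (Polynomial.X - Polynomial.C (w σ))
  have heval (τ : Γ) (y : E) :
      (p τ).eval y = ∏ σ : G, (y - w (τ * σ)) - ∏ σ : G, (y - w σ) := by
    simp [p, Polynomial.eval_prod]
  -- `w τ` is a root of the first product but, as `τ ∉ G`, not of the second
  have hp : ∀ τ ∈ (G : Set Γ)ᶜ, p τ ≠ 0 := by
    intro τ hτ h0
    have hfirst : ∏ σ : G, (w τ - w (τ * σ)) = 0 :=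
      Finset.prod_eq_zero (Finset.mem_univ 1) (by simp)
    have hsecond : ∏ σ : G, (w τ - w σ) ≠ 0 :=
      Finset.prod_ne_zero_iff.mpr fun σ _ =>
        sub_ne_zero.mpr fun h => hτ (hw h ▸ σ.2)
    have := heval τ (w τ)
    rw [h0, Polynomial.eval_zero, hfirst, zero_sub, eq_comm, neg_eq_zero] at this
    exact hsecond this
  obtain ⟨c, hc⟩ := exists_algebraMap_forall_eval_ne_zero (F := F) (Set.toFinite _) p hp
  refine ⟨c, fun τ hτ => by_contra fun hτG => hc τ hτG ?_⟩
  rw [heval, hτ, sub_self]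

end ChoiceInInfiniteField

theorem MvPolynomial.rename_prod_rename_of_mem {σ R : Type*} [CommSemiring R]
    (G : Subgroup (Equiv.Perm σ)) [Fintype G] (ψ : MvPolynomial σ R)
    {τ : Equiv.Perm σ} (hτ : τ ∈ G) :
    rename τ (∏ g : G, rename ⇑(g : Equiv.Perm σ) ψ) =
      ∏ g : G, rename ⇑(g : Equiv.Perm σ) ψ := by
  simp only [map_prod, rename_rename, ← Equiv.Perm.coe_mul]
  exact Fintype.prod_equiv (Equiv.mulLeft (⟨τ, hτ⟩ : G)) (fun g : G => rename ⇑(τ * g) ψ)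
    (fun g : G => rename ⇑(g : Equiv.Perm σ) ψ) fun g => rfl

theorem exists_galois_polynomial_with_stabilizer_general
    (F E : Type*) [Field F] [Field E] [Algebra F E] [CharZero F]
    (n : ℕ) (α : Fin n → E) (hα : Function.Injective α)
    (G : Subgroup (Equiv.Perm (Fin n))) :
    ∃ Φ : MvPolynomial (Fin n) F,
      {σ : Equiv.Perm (Fin n) | aeval (α ∘ ⇑σ) Φ = aeval α Φ} =
        (G : Set (Equiv.Perm (Fin n))) ∧
      {σ : Equiv.Perm (Fin n) | aeval (α ∘ ⇑σ) Φ = aeval α Φ} =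
        {σ : Equiv.Perm (Fin n) | rename ⇑σ Φ = Φ} := by
  classical
  obtain ⟨t, ht⟩ := exists_algebraMap_injective_sum_pow_mul (F := F)
    (x := fun ρ : Equiv.Perm (Fin n) => α ∘ ρ)
    fun ρ ρ' h => Equiv.ext fun i => hα (congrFun h i)
  let θ : MvPolynomial (Fin n) F := ∑ i : Fin n, C (t ^ (i : ℕ)) * X i
  obtain ⟨c, hc⟩ := exists_algebraMap_prod_sub_eq_imp_mem (F := F) G
    (w := fun ρ => aeval (α ∘ ρ) θ) (by simpa [θ] using ht)
  let Φ := ∏ σ : G, rename ⇑(σ : Equiv.Perm (Fin n)) (C c - θ)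
  have hevalΦ (τ : Equiv.Perm (Fin n)) :
      aeval (α ∘ τ) Φ = ∏ σ : G, (algebraMap F E c - aeval (α ∘ ⇑(τ * σ)) θ) := by
    simp [Φ, aeval_rename, Function.comp_assoc]
  have hrename_of_mem (τ : Equiv.Perm (Fin n)) (hτ : τ ∈ G) : rename τ Φ = Φ :=
    rename_prod_rename_of_mem G _ hτ
  have heval_of_rename (τ : Equiv.Perm (Fin n)) (h : rename τ Φ = Φ) :
      aeval (α ∘ τ) Φ = aeval α Φ := by
    rw [← aeval_rename, h]
  have hmem_of_eval (τ : Equiv.Perm (Fin n)) (h : aeval (α ∘ τ) Φ = aeval α Φ) :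
      τ ∈ G := by
    refine hc τ ?_
    simpa [hevalΦ] using h.trans (by simpa using hevalΦ 1)
  refine ⟨Φ, ?_, ?_⟩
  · ext τ
    exact ⟨hmem_of_eval τ, fun hτ => heval_of_rename τ (hrename_of_mem τ hτ)⟩
  · ext τ
    exact ⟨fun h => hrename_of_mem τ (hmem_of_eval τ h), heval_of_rename τ⟩

/-- **Theorem 6.1.** Let `F ⊆ E` be fields of characteristic zero and `α_1,…,α_n ∈ E` distinct
with all elementary symmetric functions `e_k(α_1,…,α_n)` in `F`.  Then every subgroup
`G ≤ S_n` is the set of permutations `σ` with `Φ(α_{σ(1)},…,α_{σ(n)}) = Φ(α_1,…,α_n)` for some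
polynomial `Φ ∈ F[x_1,…,x_n]`, and this set agrees with the stabilizer of `Φ` as a polynomial
(i.e. `Φ` is "Galois"). -/
theorem exists_galois_polynomial_with_stabilizer
    (F E : Type*) [Field F] [Field E] [Algebra F E] [CharZero F]
    (n : ℕ) (α : Fin n → E) (hα : Function.Injective α)
    (he : ∀ k : ℕ, aeval α (esymm (Fin n) F k) ∈ Set.range (algebraMap F E))
    (G : Subgroup (Equiv.Perm (Fin n))) :
    ∃ Φ : MvPolynomial (Fin n) F,
      {σ : Equiv.Perm (Fin n) | aeval (α ∘ ⇑σ) Φ = aeval α Φ} =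
        (G : Set (Equiv.Perm (Fin n))) ∧
      {σ : Equiv.Perm (Fin n) | aeval (α ∘ ⇑σ) Φ = aeval α Φ} =
        {σ : Equiv.Perm (Fin n) | rename ⇑σ Φ = Φ} :=
  exists_galois_polynomial_with_stabilizer_general F E n α hα G
end

section
/- Let F be a field of characteristic zero and let B(t) = (t−α_1)···(t−α_n) ∈ F[t] have n distinct roots in a splitting field E of B over F. Then the following are equivalent: (1) there is a labeling α_1,…,α_n of the roots and a generator σ of Gal(E/F) such that Gal(E/F) is cyclic of order n and σ(α_i) = α_{i+1} for all i (indices mod n); (2) B is irreducible in F[t] and there exist a polynomial θ(t) ∈ F[t] and a labeling α_1,…,α_n of the roots such that θ(α_i) = α_{i+1} for all i = 1,…,n, with α_{n+1} = α_1. -/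
open Polynomial

/-!
Since `B` has distinct roots it is separable, so `E/F` is Galois of degree `|Gal(E/F)|`.
If `σ` cycles the roots, they are all conjugate to `α₀`, so `B` is the minimal polynomial of
`α₀`; comparing degrees gives `E = F[α₀]`, hence `α₁ = θ(α₀)` for a polynomial `θ`, and applying
`σⁱ`, which commutes with `θ`, gives `θ(αᵢ) = αᵢ₊₁`.
Conversely, irreducibility provides `σ` with `σ(α₀) = α₁`; commuting with `θ`, it cycles all the
roots. Every root is a `θ`-iterate of `α₀`, so again `E = F[α₀]` and `|Gal(E/F)| = n`, while
`σᵏ(α₀) = αₖ` shows that `σ` has order `n`.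
-/

section FactorsAs

variable {F E ι : Type*} [Field F] [Field E] [Algebra F E] [Fintype ι] {B : F[X]} {α : ι → E}

theorem monic_of_map_eq_prod_X_sub_C (hB : B.map (algebraMap F E) = ∏ i, (X - C (α i))) :
    B.Monic :=
  (algebraMap F E).injective.monic_map_iff.mpr
    (hB ▸ monic_prod_of_monic _ _ fun i _ => monic_X_sub_C (α i))

theorem natDegree_of_map_eq_prod_X_sub_C (hB : B.map (algebraMap F E) = ∏ i, (X - C (α i))) :
    B.natDegree = Fintype.card ι := by
  rw [← natDegree_map_eq_of_injective (algebraMap F E).injective, hB,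
    natDegree_finsetProd_X_sub_C_eq_card, Finset.card_univ]

theorem aeval_eq_zero_iff_of_map_eq_prod_X_sub_C
    (hB : B.map (algebraMap F E) = ∏ i, (X - C (α i))) {x : E} :
    aeval x B = 0 ↔ ∃ i, α i = x := by
  rw [aeval_def, ← eval_map, hB, eval_prod, Finset.prod_eq_zero_iff]
  simp [sub_eq_zero, eq_comm]

theorem isGalois_of_map_eq_prod_X_sub_C [IsSplittingField F E B] (hα : Function.Injective α)
    (hB : B.map (algebraMap F E) = ∏ i, (X - C (α i))) : IsGalois F E :=
  IsGalois.of_separable_splitting_field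
    ((separable_map _).mp (hB ▸ separable_prod_X_sub_C_iff.mpr hα))

/-- The `α i` are distinct roots of `minpoly F (α i₀)`, which therefore has degree `≥ deg B`. -/
theorem minpoly_eq_of_map_eq_prod_X_sub_C (hα : Function.Injective α)
    (hB : B.map (algebraMap F E) = ∏ i, (X - C (α i))) (i₀ : ι)
    (hconj : ∀ i, ∃ g : E ≃ₐ[F] E, g (α i₀) = α i) : minpoly F (α i₀) = B := by
  have hmonic := monic_of_map_eq_prod_X_sub_C hB
  have hroot : aeval (α i₀) B = 0 := (aeval_eq_zero_iff_of_map_eq_prod_X_sub_C hB).2 ⟨i₀, rfl⟩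
  have hint : IsIntegral F (α i₀) := ⟨B, hmonic, hroot⟩
  have hne : (minpoly F (α i₀)).map (algebraMap F E) ≠ 0 :=
    (Polynomial.map_ne_zero_iff (algebraMap F E).injective).mpr (minpoly.ne_zero hint)
  have hsub : (Finset.univ.map ⟨α, hα⟩).val ⊆ ((minpoly F (α i₀)).map (algebraMap F E)).roots := by
    intro y hy
    obtain ⟨i, -, rfl⟩ := Finset.mem_map.mp hy
    obtain ⟨g, hg⟩ := hconj i
    rw [Function.Embedding.coeFn_mk, ← hg, mem_roots hne, IsRoot.def, eval_map, ← aeval_def,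
      aeval_algHom_apply, minpoly.aeval, map_zero]
  refine (eq_of_monic_of_dvd_of_natDegree_le (minpoly.monic hint) hmonic
    (minpoly.dvd F _ hroot) ?_).symm
  calc B.natDegree = (Finset.univ.map ⟨α, hα⟩).card := by
        rw [natDegree_of_map_eq_prod_X_sub_C hB, Finset.card_map, Finset.card_univ]
    _ ≤ _ := card_le_degree_of_subset_roots hsub
    _ = (minpoly F (α i₀)).natDegree := natDegree_map_eq_of_injective (algebraMap F E).injective _

end FactorsAs

section RootCycle

variable {X : Type*}

theorem iterate_apply_eq_add_of_apply_eq_add_one {R : Type*} [AddMonoidWithOne R] {f : X → X}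
    {α : R → X} (hf : ∀ i, f (α i) = α (i + 1)) (k : ℕ) (i : R) : f^[k] (α i) = α (i + k) := by
  induction k with
  | zero => simp
  | succ k ih => rw [Function.iterate_succ_apply', ih, hf, Nat.cast_succ, add_assoc]

variable {n : ℕ} [NeZero n] {α : ZMod n → X}

theorem eq_iterate_val_of_apply_eq_add_one {f : X → X} (hf : ∀ i, f (α i) = α (i + 1))
    (i : ZMod n) : α i = f^[i.val] (α 0) := by
  rw [iterate_apply_eq_add_of_apply_eq_add_one hf, zero_add, ZMod.natCast_zmod_val]

theorem apply_eq_add_one_of_commute {f g : X → X} (hfg : Function.Commute f g)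
    (hf : ∀ i, f (α i) = α (i + 1)) (hg : g (α 0) = α 1) (i : ZMod n) : g (α i) = α (i + 1) := by
  rw [eq_iterate_val_of_apply_eq_add_one hf i, ← (hfg.iterate_left i.val).eq, hg,
    iterate_apply_eq_add_of_apply_eq_add_one hf, ZMod.natCast_zmod_val, add_comm]

end RootCycle

theorem commute_algEquiv_aeval {F E : Type*} [CommRing F] [CommRing E] [Algebra F E]
    (σ : E ≃ₐ[F] E) (θ : F[X]) : Function.Commute σ (fun x => aeval x θ) :=
  fun x => (aeval_algHom_apply σ x θ).symm

theorem natCast_dvd_orderOf_of_apply_eq_add_one {F E : Type*} [CommRing F] [CommRing E]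
    [Algebra F E] {n : ℕ} {α : ZMod n → E} (hα : Function.Injective α) {σ : E ≃ₐ[F] E}
    (hσ : ∀ i, σ (α i) = α (i + 1)) : n ∣ orderOf σ := by
  have h := iterate_apply_eq_add_of_apply_eq_add_one hσ (orderOf σ) 0
  rw [← AlgEquiv.coe_pow, pow_orderOf_eq_one, AlgEquiv.one_apply, zero_add] at h
  exact (ZMod.natCast_eq_zero_iff _ _).mp (hα h).symm

theorem Subgroup.zpowers_eq_top_of_natCard_dvd_orderOf {G : Type*} [Group G] [Finite G] {g : G}
    (h : Nat.card G ∣ orderOf g) : Subgroup.zpowers g = ⊤ :=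
  (Subgroup.card_eq_iff_eq_top _).mp <| by
    rw [Nat.card_zpowers, Nat.dvd_antisymm (_root_.orderOf_dvd_natCard g) h]

theorem iterate_aeval_mem_adjoin_singleton {F E : Type*} [CommRing F] [CommRing E] [Algebra F E]
    (θ : F[X]) (x : E) (k : ℕ) : (fun y => aeval y θ)^[k] x ∈ Algebra.adjoin F {x} := by
  induction k with
  | zero => exact Algebra.self_mem_adjoin_singleton F x
  | succ k ih =>
    rw [Function.iterate_succ_apply']
    exact Algebra.adjoin_singleton_le ih (aeval_mem_adjoin_singleton F _)

theorem Algebra.adjoin_singleton_eq_top_iff_natDegree_minpoly {F E : Type*} [Field F]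
    [Field E] [Algebra F E] [FiniteDimensional F E] (x : E) :
    Algebra.adjoin F {x} = ⊤ ↔ (minpoly F x).natDegree = Module.finrank F E := by
  rw [← IntermediateField.adjoin_simple_eq_top_iff_of_isAlgebraic
    (Algebra.IsAlgebraic.isAlgebraic x), Field.primitive_element_iff_minpoly_natDegree_eq]

section Galois

variable {F E : Type*} [Field F] [Field E] [Algebra F E] {n : ℕ} [NeZero n] {B : F[X]}
  {α : ZMod n → E}

theorem irreducible_and_exists_aeval_eq_add_one_of_card_aut_eq [FiniteDimensional F E]
    [IsGalois F E] (hα : Function.Injective α) (hB : B.map (algebraMap F E) = ∏ i, (X - C (α i)))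
    {σ : E ≃ₐ[F] E} (hcard : Nat.card (E ≃ₐ[F] E) = n) (hσ : ∀ i, σ (α i) = α (i + 1)) :
    Irreducible B ∧ ∃ θ : F[X], ∀ i, aeval (α i) θ = α (i + 1) := by
  have hmin : minpoly F (α 0) = B := minpoly_eq_of_map_eq_prod_X_sub_C hα hB 0 fun i =>
    ⟨σ ^ i.val, by rw [AlgEquiv.coe_pow, ← eq_iterate_val_of_apply_eq_add_one hσ]⟩
  have hadj : Algebra.adjoin F {α 0} = ⊤ :=
    (Algebra.adjoin_singleton_eq_top_iff_natDegree_minpoly _).2 <| by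
      rw [hmin, natDegree_of_map_eq_prod_X_sub_C hB, ZMod.card, ← IsGalois.card_aut_eq_finrank,
        hcard]
  have hα1 : α 1 ∈ Algebra.adjoin F {α 0} := hadj ▸ Algebra.mem_top
  rw [Algebra.adjoin_singleton_eq_range_aeval] at hα1
  obtain ⟨θ, hθ⟩ := hα1
  exact ⟨hmin ▸ minpoly.irreducible (Algebra.IsIntegral.isIntegral _),
    θ, apply_eq_add_one_of_commute (commute_algEquiv_aeval σ θ) hσ hθ⟩

theorem adjoin_singleton_eq_top_of_aeval_eq_add_one [IsSplittingField F E B]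
    (hB : B.map (algebraMap F E) = ∏ i, (X - C (α i))) {θ : F[X]}
    (hθ : ∀ i, aeval (α i) θ = α (i + 1)) : Algebra.adjoin F {α 0} = ⊤ := by
  rw [eq_top_iff, ← IsSplittingField.adjoin_rootSet E B, Algebra.adjoin_le_iff]
  intro y hy
  obtain ⟨i, rfl⟩ := (aeval_eq_zero_iff_of_map_eq_prod_X_sub_C hB).1 (mem_rootSet.1 hy).2
  rw [eq_iterate_val_of_apply_eq_add_one (f := fun y => aeval y θ) hθ i]
  exact iterate_aeval_mem_adjoin_singleton θ _ _

theorem exists_generator_apply_eq_add_one_of_irreducible [IsSplittingField F E B]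
    (hirr : Irreducible B) (hα : Function.Injective α)
    (hB : B.map (algebraMap F E) = ∏ i, (X - C (α i))) {θ : F[X]}
    (hθ : ∀ i, aeval (α i) θ = α (i + 1)) :
    ∃ σ : E ≃ₐ[F] E, Subgroup.zpowers σ = ⊤ ∧ Nat.card (E ≃ₐ[F] E) = n ∧
      ∀ i, σ (α i) = α (i + 1) := by
  have := IsSplittingField.finiteDimensional E B
  have := isGalois_of_map_eq_prod_X_sub_C hα hB
  have hroot (i) : aeval (α i) B = 0 := (aeval_eq_zero_iff_of_map_eq_prod_X_sub_C hB).2 ⟨i, rfl⟩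
  have hmin (i) : minpoly F (α i) = B :=
    (minpoly.eq_of_irreducible_of_monic hirr (hroot i) (monic_of_map_eq_prod_X_sub_C hB)).symm
  obtain ⟨σ, hσ1⟩ := minpoly.exists_algEquiv_of_root (Algebra.IsAlgebraic.isAlgebraic (α 1))
    ((hmin 1).symm ▸ hroot 0)
  have hσ := apply_eq_add_one_of_commute (commute_algEquiv_aeval σ θ).symm hθ hσ1
  have hcard : Nat.card (E ≃ₐ[F] E) = n := by
    rw [IsGalois.card_aut_eq_finrank, ← (Algebra.adjoin_singleton_eq_top_iff_natDegree_minpoly _).1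
      (adjoin_singleton_eq_top_of_aeval_eq_add_one hB hθ), hmin,
      natDegree_of_map_eq_prod_X_sub_C hB, ZMod.card]
  exact ⟨σ, Subgroup.zpowers_eq_top_of_natCard_dvd_orderOf
    (hcard ▸ natCast_dvd_orderOf_of_apply_eq_add_one hα hσ), hcard, hσ⟩

end Galois

theorem cyclic_iff_irreducible_and_root_cycle_polynomial_general
    (F E : Type*) [Field F] [Field E] [Algebra F E]
    (n : ℕ) [NeZero n] (B : Polynomial F) [IsSplittingField F E B] :
    (∃ α : ZMod n → E, Function.Injective α ∧
        Polynomial.map (algebraMap F E) B = ∏ i, (X - C (α i)) ∧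
        ∃ σ : E ≃ₐ[F] E, (∀ g : E ≃ₐ[F] E, g ∈ Subgroup.zpowers σ) ∧
          Nat.card (E ≃ₐ[F] E) = n ∧ ∀ i : ZMod n, σ (α i) = α (i + 1)) ↔
      (Irreducible B ∧
        ∃ (θ : Polynomial F) (α : ZMod n → E), Function.Injective α ∧
          Polynomial.map (algebraMap F E) B = ∏ i, (X - C (α i)) ∧
          ∀ i : ZMod n, Polynomial.aeval (α i) θ = α (i + 1)) := by
  constructor
  · rintro ⟨α, hα, hB, σ, -, hcard, hσ⟩
    have := IsSplittingField.finiteDimensional E B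
    have := isGalois_of_map_eq_prod_X_sub_C hα hB
    obtain ⟨hirr, θ, hθ⟩ := irreducible_and_exists_aeval_eq_add_one_of_card_aut_eq hα hB hcard hσ
    exact ⟨hirr, θ, α, hα, hB, hθ⟩
  · rintro ⟨hirr, θ, α, hα, hB, hθ⟩
    obtain ⟨σ, hgen, hcard, hσ⟩ := exists_generator_apply_eq_add_one_of_irreducible hirr hα hB hθ
    exact ⟨α, hα, hB, σ, fun g => hgen ▸ Subgroup.mem_top g, hcard, hσ⟩

/-- **Theorem 7.1.** Let `B(t) = (t−α_1)···(t−α_n) ∈ F[t]` have `n` distinct roots in a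
splitting field `E` over `F` (characteristic zero).  Then the following are equivalent:
(1) there is a labeling of the roots and a generator `σ` of `Gal(E/F)` such that `Gal(E/F)` is
cyclic of order `n` with `σ(α_i) = α_{i+1}` (indices mod `n`);
(2) `B` is irreducible over `F` and there are `θ(t) ∈ F[t]` and a labeling of the roots with
`θ(α_i) = α_{i+1}` for all `i` (indices mod `n`). -/
theorem cyclic_iff_irreducible_and_root_cycle_polynomial
    (F E : Type*) [Field F] [Field E] [Algebra F E] [CharZero F]
    (n : ℕ) [NeZero n] (B : Polynomial F) [IsSplittingField F E B]
    (hroots : ∃ α : ZMod n → E, Function.Injective α ∧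
      Polynomial.map (algebraMap F E) B = ∏ i, (X - C (α i))) :
    (∃ α : ZMod n → E, Function.Injective α ∧
        Polynomial.map (algebraMap F E) B = ∏ i, (X - C (α i)) ∧
        ∃ σ : E ≃ₐ[F] E, (∀ g : E ≃ₐ[F] E, g ∈ Subgroup.zpowers σ) ∧
          Nat.card (E ≃ₐ[F] E) = n ∧ ∀ i : ZMod n, σ (α i) = α (i + 1)) ↔
      (Irreducible B ∧
        ∃ (θ : Polynomial F) (α : ZMod n → E), Function.Injective α ∧
          Polynomial.map (algebraMap F E) B = ∏ i, (X - C (α i)) ∧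
          ∀ i : ZMod n, Polynomial.aeval (α i) θ = α (i + 1)) :=
  cyclic_iff_irreducible_and_root_cycle_polynomial_general F E n B
end

section
/- Let F be a field of characteristic zero, p a prime, and a ∈ F nonzero, and suppose the binomial t^p − a is irreducible in F[t]. Let E be a splitting field of t^p − a over F. Then Gal(E/F) is cyclic of order p if and only if F contains a primitive p-th root of unity. -/
/-! If `F` contains a primitive `p`-th root of unity, this is Kummer theory: the Galois group of
`X ^ p - C a` embeds into the `p`-th roots of unity and has order `[E : F] = p`. Conversely, if
`[E : F] = p`, the quotient of two distinct roots of `X ^ p - C a` is a primitive `p`-th root of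
unity in `E`; its degree over `F` divides `p` but is at most `φ(p) = p - 1`, so it lies in `F`. -/

open Polynomial

theorem IsPrimitiveRoot.div_of_pow_eq_pow {M : Type*} [CommGroupWithZero M] {p : ℕ} (hp : p.Prime)
    {x y : M} (hy : y ≠ 0) (hxy : x ≠ y) (h : x ^ p = y ^ p) : IsPrimitiveRoot (x / y) p := by
  have := Fact.mk hp
  refine IsPrimitiveRoot.iff_orderOf.mpr (orderOf_eq_prime ?_ ?_)
  · rw [div_pow, h, div_self (pow_ne_zero p hy)]
  · exact fun h1 => hxy ((div_eq_one_iff_eq hy).mp h1)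

theorem exists_isPrimitiveRoot_of_splits_X_pow_sub_C {L : Type*} [Field L] {p : ℕ} (hp : p.Prime)
    {b : L} (hb : b ≠ 0) (hpL : (p : L) ≠ 0) (hsplit : Splits (X ^ p - C b)) :
    ∃ μ : L, IsPrimitiveRoot μ p := by
  classical
  have hnodup : (nthRoots p b).Nodup := nodup_roots (separable_X_pow_sub_C b hpL hb)
  have hcard : Multiset.card (nthRoots p b) = p := by
    rw [nthRoots, ← hsplit.natDegree_eq_card_roots, natDegree_X_pow_sub_C]
  have htwo : 1 < (nthRoots p b).toFinset.card := by
    rw [Multiset.toFinset_card_of_nodup hnodup, hcard]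
    exact hp.one_lt
  obtain ⟨x, hx, y, hy, hxy⟩ := Finset.one_lt_card.mp htwo
  rw [Multiset.mem_toFinset, mem_nthRoots hp.pos] at hx hy
  exact ⟨x / y, .div_of_pow_eq_pow hp (fun h0 => hb (by rw [← hy, h0, zero_pow hp.ne_zero])) hxy
    (hx.trans hy.symm)⟩

theorem IsPrimitiveRoot.exists_isPrimitiveRoot_of_finrank_eq {F L : Type*} [Field F] [Field L]
    [Algebra F L] {p : ℕ} (hp : p.Prime) (hrank : Module.finrank F L = p) {μ : L}
    (hμ : IsPrimitiveRoot μ p) :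
    ∃ w : F, IsPrimitiveRoot w p := by
  have : FiniteDimensional F L := Module.finite_of_finrank_pos (hrank ▸ hp.pos)
  have hint : IsIntegral F μ := .of_finite F μ
  have hcyc : aeval μ (cyclotomic p F) = 0 := by
    rw [aeval_def, eval₂_eq_eval_map, map_cyclotomic]
    exact hμ.isRoot_cyclotomic hp.pos
  have hle : (minpoly F μ).natDegree ≤ p - 1 := calc
    _ ≤ (cyclotomic p F).natDegree :=
      natDegree_le_of_dvd (minpoly.dvd F μ hcyc) (cyclotomic_ne_zero p F)
    _ = p - 1 := by rw [natDegree_cyclotomic, Nat.totient_prime hp]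
  have hdeg : (minpoly F μ).natDegree = 1 :=
    ((Nat.dvd_prime hp).mp (hrank ▸ minpoly.degree_dvd hint)).resolve_right
      (by have := hp.two_le; omega)
  obtain ⟨w, rfl⟩ := minpoly.mem_range_of_degree_eq_one F μ
    (by rw [degree_eq_natDegree (minpoly.ne_zero hint), hdeg, Nat.cast_one])
  exact ⟨w, hμ.of_map_of_injective (algebraMap F L).injective⟩

/-- **Corollary 7.1.** Let `p` be a prime, `a ∈ F` nonzero with `t^p − a` irreducible over `F`
(characteristic zero), and let `E` be a splitting field of `t^p − a` over `F`.  Then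
`Gal(E/F)` is cyclic of order `p` iff `F` contains a primitive `p`-th root of unity. -/
theorem binomial_galois_cyclic_iff_primitive_root
    (F E : Type*) [Field F] [Field E] [Algebra F E] [CharZero F]
    (p : ℕ) (hp : p.Prime) (a : F) (ha : a ≠ 0)
    (hirr : Irreducible ((X : Polynomial F) ^ p - C a))
    [IsSplittingField F E ((X : Polynomial F) ^ p - C a)] :
    (IsCyclic (E ≃ₐ[F] E) ∧ Nat.card (E ≃ₐ[F] E) = p) ↔
      ∃ w : F, IsPrimitiveRoot w p := by
  have : FiniteDimensional F E := IsSplittingField.finiteDimensional E (X ^ p - C a)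
  constructor
  · rintro ⟨-, hcard⟩
    have : Normal F E := Normal.of_isSplittingField (X ^ p - C a)
    have : IsGalois F E := ⟨⟩
    have hsplit := IsSplittingField.splits E ((X : F[X]) ^ p - C a)
    rw [Polynomial.map_sub, Polynomial.map_pow, Polynomial.map_X, Polynomial.map_C] at hsplit
    have : CharZero E := charZero_of_injective_algebraMap (algebraMap F E).injective
    obtain ⟨μ, hμ⟩ := exists_isPrimitiveRoot_of_splits_X_pow_sub_C hp
      ((_root_.map_ne_zero _).mpr ha) (Nat.cast_ne_zero.mpr hp.ne_zero) hsplit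
    have hrank : Module.finrank F E = p := by rw [← IsGalois.card_aut_eq_finrank, hcard]
    exact hμ.exists_isPrimitiveRoot_of_finrank_eq hp hrank
  · rintro ⟨w, hw⟩
    have : NeZero p := ⟨hp.ne_zero⟩
    have hζ : (primitiveRoots p F).Nonempty := ⟨w, (mem_primitiveRoots hp.pos).mpr hw⟩
    have : IsGalois F E := isGalois_of_isSplittingField_X_pow_sub_C hζ hirr E
    refine ⟨isCyclic_of_isSplittingField_X_pow_sub_C hζ hirr E, ?_⟩
    rw [IsGalois.card_aut_eq_finrank, finrank_of_isSplittingField_X_pow_sub_C hζ hirr E]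
end

section
/- (Gauss) Let p be a prime, let w ∈ ℂ be a primitive p-th root of unity, let e be a primitive root modulo p (i.e. the powers e, e², …, e^{p−1} run through all nonzero residues mod p), and let p − 1 = a·b with a, b positive integers. Define the Gaussian period polynomial Π_a(t) = Σ_{i=0}^{b−1} t^{(e^{ia})}. Then for all integers r, s with 0 ≤ r, s ≤ a−1, Π_a(w^{e^r}) · Π_a(w^{e^s}) = Σ_{i=0}^{b−1} Π_a(w^{(e^r + e^{s+ia})}). -/
open Finset

/-- The Gaussian period polynomial `Π_a(t) = Σ_{i=0}^{b−1} t^{e^{ia}}`. -/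
noncomputable def gaussPeriod (e a b : ℕ) (t : ℂ) : ℂ :=
  ∑ i ∈ Finset.range b, t ^ e ^ (i * a)

private lemma gauss_sum_shift_one (g : ℕ → ℂ) (b : ℕ) (hgb : g b = g 0) :
    ∑ i ∈ Finset.range b, g (i + 1) = ∑ i ∈ Finset.range b, g i := by
  have h1 := Finset.sum_range_succ' g b
  have h2 := Finset.sum_range_succ g b
  rw [h2, hgb] at h1
  linear_combination -h1

private lemma gauss_sum_shift (g : ℕ → ℂ) (b : ℕ) (hg : ∀ i, g (i + b) = g i) (j : ℕ) :
    ∑ i ∈ Finset.range b, g (i + j) = ∑ i ∈ Finset.range b, g i := by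
  induction j with
  | zero => simp
  | succ j ih =>
    have h : ∑ i ∈ Finset.range b, g (i + (j + 1))
        = ∑ i ∈ Finset.range b, (fun i => g (i + j)) (i + 1) := by
      refine Finset.sum_congr rfl fun i _ => ?_
      simp only []
      congr 1
      omega
    rw [h, gauss_sum_shift_one (fun i => g (i + j)) b ?_, ih]
    show g (b + j) = g (0 + j)
    rw [Nat.zero_add, Nat.add_comm, hg]

/-- **Lemma 7.1 (Gauss).** Let `p` be a prime, `w` a primitive `p`-th root of unity in `ℂ`,
`e` a primitive root modulo `p`, and `p − 1 = a·b`.  Then for all `0 ≤ r, s ≤ a−1`,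
`Π_a(w^{e^r}) · Π_a(w^{e^s}) = Σ_{i=0}^{b−1} Π_a(w^{e^r + e^{s+ia}})`. -/
theorem gauss_period_multiplication
    (p : ℕ) (hp : p.Prime) (w : ℂ) (hw : IsPrimitiveRoot w p)
    (e : ℕ)
    (he : ∀ m : ZMod p, m ≠ 0 → ∃ i : ℕ, 1 ≤ i ∧ i ≤ p - 1 ∧ (e : ZMod p) ^ i = m)
    (a b : ℕ) (ha : 0 < a) (hb : 0 < b) (hab : p - 1 = a * b)
    (r s : ℕ) (hr : r ≤ a - 1) (hs : s ≤ a - 1) :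
    gaussPeriod e a b (w ^ e ^ r) * gaussPeriod e a b (w ^ e ^ s) =
      ∑ i ∈ Finset.range b, gaussPeriod e a b (w ^ (e ^ r + e ^ (s + i * a))) := by
  have hp1 : 1 < p := hp.one_lt
  haveI : Fact p.Prime := ⟨hp⟩
  have hep : (e : ZMod p) ≠ 0 := by
    obtain ⟨i, hi1, _, hie⟩ := he 1 one_ne_zero
    intro h
    rw [h, zero_pow (by omega)] at hie
    exact one_ne_zero hie.symm
  have hfermat : (e : ZMod p) ^ (p - 1) = 1 := ZMod.pow_card_sub_one_eq_one hep
  have hba : (e : ZMod p) ^ (b * a) = 1 := by rw [Nat.mul_comm, ← hab]; exact hfermat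
  have hwp : w ^ p = 1 := hw.pow_eq_one
  have key : ∀ m n : ℕ, ((m : ZMod p) = (n : ZMod p)) → w ^ m = w ^ n := by
    intro m n h
    rw [ZMod.natCast_eq_natCast_iff, Nat.ModEq] at h
    calc w ^ m = (w ^ p) ^ (m / p) * w ^ (m % p) := by
          rw [← pow_mul, ← pow_add, Nat.div_add_mod]
      _ = (w ^ p) ^ (n / p) * w ^ (n % p) := by rw [hwp, one_pow, one_pow, h]
      _ = w ^ n := by rw [← pow_mul, ← pow_add, Nat.div_add_mod]
  unfold gaussPeriod
  calc (∑ j ∈ Finset.range b, (w ^ e ^ r) ^ e ^ (j * a)) *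
        (∑ i ∈ Finset.range b, (w ^ e ^ s) ^ e ^ (i * a))
      = ∑ j ∈ Finset.range b, ∑ i ∈ Finset.range b,
          w ^ (e ^ (r + j * a) + e ^ (s + i * a)) := by
        rw [Finset.sum_mul_sum]
        refine Finset.sum_congr rfl fun j _ => Finset.sum_congr rfl fun i _ => ?_
        rw [← pow_mul, ← pow_mul, ← pow_add, ← pow_add, ← pow_add]
    _ = ∑ j ∈ Finset.range b, ∑ i ∈ Finset.range b,
          w ^ (e ^ (r + j * a) + e ^ (s + (i + j) * a)) := by
        refine Finset.sum_congr rfl fun j _ => ?_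
        refine (gauss_sum_shift (fun i => w ^ (e ^ (r + j * a) + e ^ (s + i * a))) b
          (fun i => ?_) j).symm
        refine key _ _ ?_
        have hx : s + (i + b) * a = s + i * a + b * a := by ring
        rw [hx]
        push_cast [pow_add]
        rw [hba]
        ring
    _ = ∑ i ∈ Finset.range b, ∑ j ∈ Finset.range b,
          w ^ ((e ^ r + e ^ (s + i * a)) * e ^ (j * a)) := by
        rw [Finset.sum_comm]
        refine Finset.sum_congr rfl fun i _ => Finset.sum_congr rfl fun j _ => ?_
        congr 1
        simp only [add_mul, pow_add]
        ring
    _ = ∑ i ∈ Finset.range b, ∑ j ∈ Finset.range b,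
          (w ^ (e ^ r + e ^ (s + i * a))) ^ e ^ (j * a) := by
        refine Finset.sum_congr rfl fun i _ => Finset.sum_congr rfl fun j _ => ?_
        rw [pow_mul]
end
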